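/- arXiv:1611.07758 — 5 statements merged into one kernel-verified Lean document; each statement's English description precedes it below -/
import Mathlib

section
/- Let K₁, K₂, L₁, L₂, L₃, M₁, M₂ ∈ ℂ, let U ⊆ ℂ∖{0,1} be open, and let y : U → ℂ be holomorphic and satisfy on U the third-order ODE y''' + ((K₁ z + K₂(z−1))/(z(z−1))) y'' + ((L₁ z² + L₂(z−1)² + L₃ z(z−1))/(z²(z−1)²)) y' + ((M₁ z + M₂(z−1))/(z²(z−1)²)) y = 0. Let η, ζ ∈ ℂ satisfy M₂ + ηζ + ηK₂ − η = 0 and L₂ + ζK₂ + ζ² − ζ = 0. Define f : U → ℂ³ by f(z) = (y(z), (z−1)y'(z), (η/z)y(z) + ζ((z−1)/z)y'(z) + (z−1)² y''(z)). Then f satisfies on U the Fuchsian system f'(z) = (A/z + B/(z−1)) f(z), where A = [[0,0,0],[η,ζ,0],[−M₁−M₂+(ζ+2−K₁)η, −η−L₂−L₃+ζ²+(1−K₁)ζ, −ζ−K₂]] and B = [[0,1,0],[−η,1−ζ,1],[(K₁−ζ−2)η, η−L₁−ζ²−(1−K₁)ζ, 2+ζ−K₁]]. -/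
open Matrix

/-! The product rule expresses `f'` through `y, y', y'', y'''`, and the ODE eliminates `y'''`,
so the claim reduces to a rational identity in `z`. The only obstruction to writing the third
component of `f'` with simple poles is a double pole at `z = 0` in the coefficients of `y` and
`y'`; the two constraints on `η` and `ζ` are precisely its vanishing. -/

/-- The residue matrix `A` at `z = 0` of the Fuchsian system of Proposition 4. -/
noncomputable def fuchsA (K₁ K₂ L₁ L₂ L₃ M₁ M₂ η ζ : ℂ) : Matrix (Fin 3) (Fin 3) ℂ :=
  !![0, 0, 0;
     η, ζ, 0;
     -M₁ - M₂ + (ζ + 2 - K₁) * η, -η - L₂ - L₃ + ζ ^ 2 + (1 - K₁) * ζ, -ζ - K₂]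

/-- The residue matrix `B` at `z = 1` of the Fuchsian system of Proposition 4. -/
noncomputable def fuchsB (K₁ K₂ L₁ L₂ L₃ M₁ M₂ η ζ : ℂ) : Matrix (Fin 3) (Fin 3) ℂ :=
  !![0, 1, 0;
     -η, 1 - ζ, 1;
     (K₁ - ζ - 2) * η, η - L₁ - ζ ^ 2 - (1 - K₁) * ζ, 2 + ζ - K₁]

noncomputable def gaugeVec (η ζ z u v w : ℂ) : Fin 3 → ℂ :=
  ![u, (z - 1) * v, η / z * u + ζ * ((z - 1) / z) * v + (z - 1) ^ 2 * w]

theorem hasDerivAt_gaugeVec (η ζ : ℂ) {u v w : ℂ → ℂ} {u' v' w' z : ℂ}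
    (hu : HasDerivAt u u' z) (hv : HasDerivAt v v' z) (hw : HasDerivAt w w' z) (hz : z ≠ 0) :
    HasDerivAt (fun x => gaugeVec η ζ x (u x) (v x) (w x))
      ![u', v z + (z - 1) * v',
        -η / z ^ 2 * u z + η / z * u' + ζ / z ^ 2 * v z + ζ * ((z - 1) / z) * v'
          + 2 * (z - 1) * w z + (z - 1) ^ 2 * w'] z := by
  have hsub : HasDerivAt (fun x : ℂ => x - 1) 1 z := (hasDerivAt_id z).sub_const 1
  have hinv : HasDerivAt (fun x : ℂ => x⁻¹) (-(z ^ 2)⁻¹) z := hasDerivAt_inv hz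
  rw [hasDerivAt_pi]
  intro i
  fin_cases i
  · exact hu
  · show HasDerivAt (fun x => (x - 1) * v x) (v z + (z - 1) * v') z
    exact (hsub.mul hv).congr_deriv (by rw [one_mul])
  · have h := ((hinv.const_mul η).mul hu).add (((hsub.mul hinv).const_mul ζ).mul hv)
      |>.add ((hsub.pow 2).mul hw)
    convert h using 1
    · funext x
      simp only [gaugeVec, div_eq_mul_inv, mul_assoc, Fin.reduceFinMk, cons_val, Pi.mul_apply,
        Pi.add_apply, Pi.pow_apply]
    · simp only [Fin.reduceFinMk, cons_val, Pi.mul_apply, Pi.pow_apply]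
      field_simp
      ring

theorem fuchsian_mulVec_gaugeVec {K₁ K₂ L₁ L₂ L₃ M₁ M₂ η ζ z y₀ y₁ y₂ y₃ : ℂ}
    (hz₀ : z ≠ 0) (hz₁ : z - 1 ≠ 0)
    (hη : M₂ + η * ζ + η * K₂ - η = 0) (hζ : L₂ + ζ * K₂ + ζ ^ 2 - ζ = 0)
    (hode : y₃ + (K₁ * z + K₂ * (z - 1)) / (z * (z - 1)) * y₂
        + (L₁ * z ^ 2 + L₂ * (z - 1) ^ 2 + L₃ * z * (z - 1)) / (z ^ 2 * (z - 1) ^ 2) * y₁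
        + (M₁ * z + M₂ * (z - 1)) / (z ^ 2 * (z - 1) ^ 2) * y₀ = 0) :
    (z⁻¹ • fuchsA K₁ K₂ L₁ L₂ L₃ M₁ M₂ η ζ + (z - 1)⁻¹ • fuchsB K₁ K₂ L₁ L₂ L₃ M₁ M₂ η ζ)
        *ᵥ gaugeVec η ζ z y₀ y₁ y₂ =
      ![y₁, y₁ + (z - 1) * y₂,
        -η / z ^ 2 * y₀ + η / z * y₁ + ζ / z ^ 2 * y₁ + ζ * ((z - 1) / z) * y₂
          + 2 * (z - 1) * y₂ + (z - 1) ^ 2 * y₃] := by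
  obtain rfl : M₂ = η - η * ζ - η * K₂ := by linear_combination hη
  obtain rfl : L₂ = ζ - ζ * K₂ - ζ ^ 2 := by linear_combination hζ
  have hy₃ : y₃ = -((K₁ * z + K₂ * (z - 1)) / (z * (z - 1)) * y₂
      + (L₁ * z ^ 2 + (ζ - ζ * K₂ - ζ ^ 2) * (z - 1) ^ 2 + L₃ * z * (z - 1))
        / (z ^ 2 * (z - 1) ^ 2) * y₁
      + (M₁ * z + (η - η * ζ - η * K₂) * (z - 1)) / (z ^ 2 * (z - 1) ^ 2) * y₀) := by
    linear_combination hode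
  subst hy₃
  ext i
  fin_cases i <;>
    simp only [mulVec, dotProduct, Fin.sum_univ_three, fuchsA, fuchsB, gaugeVec, Matrix.add_apply,
      smul_of, smul_cons, smul_eq_mul, smul_empty, of_apply, cons_val', cons_val_fin_one, cons_val,
      cons_val_zero, cons_val_one, Fin.reduceFinMk, Fin.zero_eta, Fin.mk_one] <;>
    field_simp <;> ring

/-- main part of Proposition 4.  A holomorphic solution `y` of the
third-order Fuchsian ODE (8.1) gives rise, via the gauge transformation
`y ↦ (y, (z−1)y', (η/z)y + ζ((z−1)/z)y' + (z−1)²y'')`, to a solution `f` of the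
first-order Fuchsian system `f' = (A/z + B/(z−1)) f`. -/
theorem dotsenko_fateev_fuchsian_system (K₁ K₂ L₁ L₂ L₃ M₁ M₂ : ℂ)
    (U : Set ℂ) (hU : IsOpen U) (hU01 : U ⊆ {0, 1}ᶜ)
    (y : ℂ → ℂ) (hy : DifferentiableOn ℂ y U)
    (hode : ∀ z ∈ U,
      deriv (deriv (deriv y)) z
        + ((K₁ * z + K₂ * (z - 1)) / (z * (z - 1))) * deriv (deriv y) z
        + ((L₁ * z ^ 2 + L₂ * (z - 1) ^ 2 + L₃ * z * (z - 1)) / (z ^ 2 * (z - 1) ^ 2)) * deriv y z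
        + ((M₁ * z + M₂ * (z - 1)) / (z ^ 2 * (z - 1) ^ 2)) * y z = 0)
    (η ζ : ℂ) (hη : M₂ + η * ζ + η * K₂ - η = 0) (hζ : L₂ + ζ * K₂ + ζ ^ 2 - ζ = 0)
    (f : ℂ → Fin 3 → ℂ)
    (hf : ∀ z, f z = ![y z, (z - 1) * deriv y z,
      (η / z) * y z + ζ * ((z - 1) / z) * deriv y z + (z - 1) ^ 2 * deriv (deriv y) z]) :
    ∀ z ∈ U, HasDerivAt f
      ((z⁻¹ • fuchsA K₁ K₂ L₁ L₂ L₃ M₁ M₂ η ζ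
        + (z - 1)⁻¹ • fuchsB K₁ K₂ L₁ L₂ L₃ M₁ M₂ η ζ).mulVec (f z)) z := by
  intro z hz
  obtain ⟨hz₀, hz₁⟩ : z ≠ 0 ∧ z ≠ 1 := by simpa [not_or] using hU01 hz
  have hy₀ : AnalyticOnNhd ℂ y U := hy.analyticOnNhd hU
  have hy₁ : AnalyticOnNhd ℂ (deriv y) U := hy₀.deriv
  have hy₂ : AnalyticOnNhd ℂ (deriv (deriv y)) U := hy₁.deriv
  rw [show f = fun x => gaugeVec η ζ x (y x) (deriv y x) (deriv (deriv y) x) from funext hf]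
  refine (hasDerivAt_gaugeVec η ζ (hy₀ z hz).differentiableAt.hasDerivAt
    (hy₁ z hz).differentiableAt.hasDerivAt (hy₂ z hz).differentiableAt.hasDerivAt hz₀).congr_deriv ?_
  exact (fuchsian_mulVec_gaugeVec hz₀ (sub_ne_zero.2 hz₁) hη hζ (hode z hz)).symm
end

section
/- Let K₁, K₂, L₁, L₂, L₃, M₁, M₂ ∈ ℂ, let U ⊆ ℂ∖{0,1} be a nonempty open set, and let η, ζ ∈ ℂ satisfy M₂ + ηζ + ηK₂ − η = 0 and L₂ + ζK₂ + ζ² − ζ = 0. Let V be the ℂ-vector space of holomorphic solutions y on U of y''' + ((K₁ z + K₂(z−1))/(z(z−1))) y'' + ((L₁ z² + L₂(z−1)² + L₃ z(z−1))/(z²(z−1)²)) y' + ((M₁ z + M₂(z−1))/(z²(z−1)²)) y = 0, and let W be the ℂ-vector space of holomorphic solutions f : U → ℂ³ of the system f'(z) = (A/z + B/(z−1)) f(z), with A = [[0,0,0],[η,ζ,0],[−M₁−M₂+(ζ+2−K₁)η, −η−L₂−L₃+ζ²+(1−K₁)ζ, −ζ−K₂]] and B = [[0,1,0],[−η,1−ζ,1],[(K₁−ζ−2)η,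 η−L₁−ζ²−(1−K₁)ζ, 2+ζ−K₁]]. Then the map y ↦ (y, (z−1)y', (η/z)y + ζ((z−1)/z)y' + (z−1)²y'') is a ℂ-linear isomorphism from V onto W. -/
open Matrix
open scoped Classical

/-- The gauge map `y ↦ (y, (z−1)y', (η/z)y + ζ((z−1)/z)y' + (z−1)²y'')`,
normalized to `0` outside `U` (solutions are regarded as functions on `U`,
encoded as functions on `ℂ` vanishing off `U`). -/
noncomputable def gaugeMap (η ζ : ℂ) (U : Set ℂ) (y : ℂ → ℂ) : ℂ → Fin 3 → ℂ :=
  fun z => if z ∈ U then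
    ![y z, (z - 1) * deriv y z,
      (η / z) * y z + ζ * ((z - 1) / z) * deriv y z + (z - 1) ^ 2 * deriv (deriv y) z]
  else 0

/-!
Componentwise, the first two rows of the Fuchsian system say that `f 1 = (z - 1) (f 0)'` and
`f 2 = (η / z) f 0 + ζ ((z - 1) / z) (f 0)' + (z - 1)² (f 0)''`, i.e. every solution is the gauge
transform of its first component. Conversely, differentiating the gauge transform of any
holomorphic `y` reproduces the system exactly, except in the last row, where the defect is
`(z - 1)²` times the left-hand side of the third-order equation: the two relations between `η`,
`ζ` and the coefficients are exactly what makes the terms in `y` and `y'` cancel there. So the gauge map and the first-component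
projection are inverse bijections between the two solution spaces; linearity is that of `deriv`.
-/

open Filter Topology

section Fuchs

variable {K₁ K₂ L₁ L₂ L₃ M₁ M₂ η ζ : ℂ} {U : Set ℂ} {y y₁ y₂ : ℂ → ℂ} {f : ℂ → Fin 3 → ℂ} {z : ℂ}

lemma ne_zero_and_ne_one_of_mem (hU01 : U ⊆ {0, 1}ᶜ) (hz : z ∈ U) : z ≠ 0 ∧ z ≠ 1 := by
  simpa [not_or] using hU01 hz

noncomputable def fuchsMatrix (K₁ K₂ L₁ L₂ L₃ M₁ M₂ η ζ z : ℂ) : Matrix (Fin 3) (Fin 3) ℂ :=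
  z⁻¹ • fuchsA K₁ K₂ L₁ L₂ L₃ M₁ M₂ η ζ + (z - 1)⁻¹ • fuchsB K₁ K₂ L₁ L₂ L₃ M₁ M₂ η ζ

noncomputable def odeCleared (K₁ K₂ L₁ L₂ L₃ M₁ M₂ : ℂ) (y : ℂ → ℂ) (z : ℂ) : ℂ :=
  z ^ 2 * (z - 1) ^ 2 * deriv (deriv (deriv y)) z
    + z * (z - 1) * (K₁ * z + K₂ * (z - 1)) * deriv (deriv y) z
    + (L₁ * z ^ 2 + L₂ * (z - 1) ^ 2 + L₃ * z * (z - 1)) * deriv y z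
    + (M₁ * z + M₂ * (z - 1)) * y z

lemma ode_eq_odeCleared_div (hz0 : z ≠ 0) (hz1 : z ≠ 1) :
    deriv (deriv (deriv y)) z
        + ((K₁ * z + K₂ * (z - 1)) / (z * (z - 1))) * deriv (deriv y) z
        + ((L₁ * z ^ 2 + L₂ * (z - 1) ^ 2 + L₃ * z * (z - 1)) /
            (z ^ 2 * (z - 1) ^ 2)) * deriv y z
        + ((M₁ * z + M₂ * (z - 1)) / (z ^ 2 * (z - 1) ^ 2)) * y z
      = odeCleared K₁ K₂ L₁ L₂ L₃ M₁ M₂ y z / (z ^ 2 * (z - 1) ^ 2) := by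
  have : z - 1 ≠ 0 := sub_ne_zero.2 hz1
  unfold odeCleared
  field_simp

lemma odeCleared_eq_zero_iff (hz0 : z ≠ 0) (hz1 : z ≠ 1) :
    deriv (deriv (deriv y)) z
        + ((K₁ * z + K₂ * (z - 1)) / (z * (z - 1))) * deriv (deriv y) z
        + ((L₁ * z ^ 2 + L₂ * (z - 1) ^ 2 + L₃ * z * (z - 1)) /
            (z ^ 2 * (z - 1) ^ 2)) * deriv y z
        + ((M₁ * z + M₂ * (z - 1)) / (z ^ 2 * (z - 1) ^ 2)) * y z = 0
      ↔ odeCleared K₁ K₂ L₁ L₂ L₃ M₁ M₂ y z = 0 := by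
  have : z ^ 2 * (z - 1) ^ 2 ≠ 0 := by have := sub_ne_zero.2 hz1; positivity
  rw [ode_eq_odeCleared_div hz0 hz1, div_eq_zero_iff, or_iff_left this]

lemma fuchsMatrix_mulVec (v : Fin 3 → ℂ) :
    fuchsMatrix K₁ K₂ L₁ L₂ L₃ M₁ M₂ η ζ z *ᵥ v =
    ![(z - 1)⁻¹ * v 1,
      z⁻¹ * (η * v 0 + ζ * v 1) + (z - 1)⁻¹ * (-(η * v 0) + (1 - ζ) * v 1 + v 2),
      z⁻¹ * ((-M₁ - M₂ + (ζ + 2 - K₁) * η) * v 0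
          + (-η - L₂ - L₃ + ζ ^ 2 + (1 - K₁) * ζ) * v 1 + (-ζ - K₂) * v 2)
        + (z - 1)⁻¹ * ((K₁ - ζ - 2) * η * v 0
          + (η - L₁ - ζ ^ 2 - (1 - K₁) * ζ) * v 1 + (2 + ζ - K₁) * v 2)] := by
  ext i
  fin_cases i <;>
    simp [fuchsMatrix, fuchsA, fuchsB, mulVec, dotProduct, Fin.sum_univ_three] <;> ring

lemma gaugeMap_of_mem (hz : z ∈ U) :
    gaugeMap η ζ U y z = ![y z, (z - 1) * deriv y z,
      η / z * y z + ζ * ((z - 1) / z) * deriv y z + (z - 1) ^ 2 * deriv (deriv y) z] :=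
  if_pos hz

lemma gaugeMap_of_notMem (hz : z ∉ U) : gaugeMap η ζ U y z = 0 :=
  if_neg hz

theorem hasDerivAt_gaugeMap (hη : M₂ + η * ζ + η * K₂ - η = 0) (hζ : L₂ + ζ * K₂ + ζ ^ 2 - ζ = 0)
    (hU : IsOpen U) (hy : DifferentiableOn ℂ y U) (hz : z ∈ U) (hz0 : z ≠ 0) (hz1 : z ≠ 1) :
    HasDerivAt (gaugeMap η ζ U y)
      (fuchsMatrix K₁ K₂ L₁ L₂ L₃ M₁ M₂ η ζ z *ᵥ gaugeMap η ζ U y z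
        + ![0, 0, odeCleared K₁ K₂ L₁ L₂ L₃ M₁ M₂ y z / z ^ 2]) z := by
  have hz1' : z - 1 ≠ 0 := sub_ne_zero.2 hz1
  have hUz := hU.mem_nhds hz
  have hy₁ : HasDerivAt y (deriv y z) z := (hy.differentiableAt hUz).hasDerivAt
  have hy₂ : HasDerivAt (deriv y) (deriv (deriv y) z) z :=
    ((hy.deriv hU).differentiableAt hUz).hasDerivAt
  have hy₃ : HasDerivAt (deriv (deriv y)) (deriv (deriv (deriv y)) z) z :=
    (((hy.deriv hU).deriv hU).differentiableAt hUz).hasDerivAt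
  have hloc : gaugeMap η ζ U y =ᶠ[𝓝 z] fun w => ![y w, (w - 1) * deriv y w,
      η / w * y w + ζ * ((w - 1) / w) * deriv y w + (w - 1) ^ 2 * deriv (deriv y) w] :=
    eventually_of_mem hUz fun w hw => gaugeMap_of_mem hw
  refine HasDerivAt.congr_of_eventuallyEq ?_ hloc
  rw [gaugeMap_of_mem hz, fuchsMatrix_mulVec, hasDerivAt_pi]
  intro i
  fin_cases i <;> simp only [Fin.zero_eta, Fin.mk_one, Fin.reduceFinMk, Pi.add_apply, cons_val,
    Fin.isValue]
  · exact hy₁.congr_deriv (by field_simp; ring)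
  · exact (((hasDerivAt_id' z).sub_const 1).fun_mul hy₂).congr_deriv (by field_simp; ring)
  · have h₀ := ((hasDerivAt_const z η).fun_div (hasDerivAt_id' z) hz0).fun_mul hy₁
    have h₁ :=
      ((((hasDerivAt_id' z).sub_const 1).fun_div (hasDerivAt_id' z) hz0).const_mul ζ).fun_mul hy₂
    have h₂ := (((hasDerivAt_id' z).sub_const 1).fun_pow 2).fun_mul hy₃
    refine ((h₀.fun_add h₁).fun_add h₂).congr_deriv ?_
    unfold odeCleared
    linear_combination (norm := skip) (y z / z ^ 2) * hη + ((z - 1) / z ^ 2 * deriv y z) * hζ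
    field_simp
    ring

lemma gaugeMap_add (η ζ : ℂ) (hU : IsOpen U) (h₁ : DifferentiableOn ℂ y₁ U)
    (h₂ : DifferentiableOn ℂ y₂ U) :
    gaugeMap η ζ U (y₁ + y₂) = gaugeMap η ζ U y₁ + gaugeMap η ζ U y₂ := by
  ext z : 1
  by_cases hz : z ∈ U
  · have hderiv : deriv (y₁ + y₂) =ᶠ[𝓝 z] deriv y₁ + deriv y₂ :=
      eventually_of_mem (hU.mem_nhds hz) fun w hw =>
        deriv_add (h₁.differentiableAt (hU.mem_nhds hw)) (h₂.differentiableAt (hU.mem_nhds hw))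
    have hderiv₂ : deriv (deriv (y₁ + y₂)) z = deriv (deriv y₁) z + deriv (deriv y₂) z := by
      rw [hderiv.deriv_eq, deriv_add ((h₁.deriv hU).differentiableAt (hU.mem_nhds hz))
        ((h₂.deriv hU).differentiableAt (hU.mem_nhds hz))]
    simp only [Pi.add_apply, gaugeMap_of_mem hz, hderiv.eq_of_nhds, hderiv₂]
    ext i
    fin_cases i <;> simp <;> ring
  · simp [gaugeMap_of_notMem hz]

lemma gaugeMap_smul (η ζ : ℂ) (hU : IsOpen U) (hy : DifferentiableOn ℂ y U) (c : ℂ) :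
    gaugeMap η ζ U (c • y) = c • gaugeMap η ζ U y := by
  ext z : 1
  by_cases hz : z ∈ U
  · have hderiv : deriv (c • y) =ᶠ[𝓝 z] c • deriv y :=
      eventually_of_mem (hU.mem_nhds hz) fun w hw =>
        deriv_const_smul c (hy.differentiableAt (hU.mem_nhds hw))
    have hderiv₂ : deriv (deriv (c • y)) z = c * deriv (deriv y) z := by
      rw [hderiv.deriv_eq, deriv_const_smul c ((hy.deriv hU).differentiableAt (hU.mem_nhds hz))]
      rfl
    simp only [Pi.smul_apply, smul_eq_mul, gaugeMap_of_mem hz, hderiv.eq_of_nhds, hderiv₂]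
    ext i
    fin_cases i <;> simp <;> ring
  · simp [gaugeMap_of_notMem hz]

theorem hasDerivAt_gaugeMap_of_odeCleared_eq_zero (hη : M₂ + η * ζ + η * K₂ - η = 0)
    (hζ : L₂ + ζ * K₂ + ζ ^ 2 - ζ = 0) (hU : IsOpen U) (hy : DifferentiableOn ℂ y U) (hz : z ∈ U)
    (hz0 : z ≠ 0) (hz1 : z ≠ 1) (hode : odeCleared K₁ K₂ L₁ L₂ L₃ M₁ M₂ y z = 0) :
    HasDerivAt (gaugeMap η ζ U y)
      (fuchsMatrix K₁ K₂ L₁ L₂ L₃ M₁ M₂ η ζ z *ᵥ gaugeMap η ζ U y z) z := by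
  convert hasDerivAt_gaugeMap (K₁ := K₁) (L₁ := L₁) (L₃ := L₃) (M₁ := M₁) hη hζ hU hy hz hz0 hz1
    using 1
  rw [hode, zero_div, ← zero_empty, cons_zero_zero, cons_zero_zero, cons_zero_zero, add_zero]

lemma gaugeMap_injOn (η ζ : ℂ) (U : Set ℂ) :
    Set.InjOn (gaugeMap η ζ U) {y | ∀ z ∉ U, y z = 0} := by
  intro y₁ h₁ y₂ h₂ heq
  ext z
  by_cases hz : z ∈ U
  · simpa [gaugeMap_of_mem hz] using congrFun (congrFun heq z) 0
  · rw [h₁ z hz, h₂ z hz]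

section FuchsSolution

variable (hf : ∀ z ∈ U, HasDerivAt f (fuchsMatrix K₁ K₂ L₁ L₂ L₃ M₁ M₂ η ζ z *ᵥ f z) z)
include hf

lemma hasDerivAt_apply_zero_of_fuchs (hz : z ∈ U) :
    HasDerivAt (fun w => f w 0) ((z - 1)⁻¹ * f z 1) z := by
  simpa [fuchsMatrix_mulVec] using hasDerivAt_pi.1 (hf z hz) 0

lemma hasDerivAt_apply_one_of_fuchs (hz : z ∈ U) :
    HasDerivAt (fun w => f w 1)
      (z⁻¹ * (η * f z 0 + ζ * f z 1) + (z - 1)⁻¹ * (-(η * f z 0) + (1 - ζ) * f z 1 + f z 2)) z := by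
  simpa [fuchsMatrix_mulVec] using hasDerivAt_pi.1 (hf z hz) 1

lemma differentiableOn_apply_zero_of_fuchs : DifferentiableOn ℂ (fun w => f w 0) U :=
  fun _ hz => (hasDerivAt_apply_zero_of_fuchs hf hz).differentiableAt.differentiableWithinAt

theorem gaugeMap_apply_zero_of_fuchs (hU : IsOpen U) (hU01 : U ⊆ {0, 1}ᶜ)
    (hf0 : ∀ z ∉ U, f z = 0) : gaugeMap η ζ U (fun w => f w 0) = f := by
  ext z : 1
  by_cases hz : z ∈ U
  · obtain ⟨hz0, hz1⟩ := ne_zero_and_ne_one_of_mem hU01 hz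
    have hz1' : z - 1 ≠ 0 := sub_ne_zero.2 hz1
    have hderiv : deriv (fun w => f w 0) =ᶠ[𝓝 z] fun w => (w - 1)⁻¹ * f w 1 :=
      eventually_of_mem (hU.mem_nhds hz) fun w hw => (hasDerivAt_apply_zero_of_fuchs hf hw).deriv
    have hderiv₂ := (((hasDerivAt_id' z).sub_const 1).fun_inv hz1').fun_mul
      (hasDerivAt_apply_one_of_fuchs hf hz)
    rw [gaugeMap_of_mem hz, hderiv.eq_of_nhds, hderiv.deriv_eq, hderiv₂.deriv]
    ext i
    fin_cases i <;> simp
    · field_simp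
    · field_simp
      ring
  · rw [gaugeMap_of_notMem hz, hf0 z hz]

theorem odeCleared_apply_zero_of_fuchs (hη : M₂ + η * ζ + η * K₂ - η = 0)
    (hζ : L₂ + ζ * K₂ + ζ ^ 2 - ζ = 0) (hU : IsOpen U) (hU01 : U ⊆ {0, 1}ᶜ)
    (hf0 : ∀ z ∉ U, f z = 0) (hz : z ∈ U) :
    odeCleared K₁ K₂ L₁ L₂ L₃ M₁ M₂ (fun w => f w 0) z = 0 := by
  obtain ⟨hz0, hz1⟩ := ne_zero_and_ne_one_of_mem hU01 hz
  have h := hasDerivAt_gaugeMap (K₁ := K₁) (L₁ := L₁) (L₃ := L₃) (M₁ := M₁) hη hζ hU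
    (differentiableOn_apply_zero_of_fuchs hf) hz hz0 hz1
  rw [gaugeMap_apply_zero_of_fuchs hf hU hU01 hf0] at h
  simpa [hz0] using congrFun ((hf z hz).unique h) 2

end FuchsSolution

end Fuchs

theorem gauge_map_linear_isomorphism_general (K₁ K₂ L₁ L₂ L₃ M₁ M₂ η ζ : ℂ)
    (U : Set ℂ) (hU : IsOpen U) (hU01 : U ⊆ {0, 1}ᶜ)
    (hη : M₂ + η * ζ + η * K₂ - η = 0) (hζ : L₂ + ζ * K₂ + ζ ^ 2 - ζ = 0)
    (V : Set (ℂ → ℂ))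
    (hV : V = {y : ℂ → ℂ | (∀ z ∉ U, y z = 0) ∧ DifferentiableOn ℂ y U ∧
      ∀ z ∈ U,
        deriv (deriv (deriv y)) z
          + ((K₁ * z + K₂ * (z - 1)) / (z * (z - 1))) * deriv (deriv y) z
          + ((L₁ * z ^ 2 + L₂ * (z - 1) ^ 2 + L₃ * z * (z - 1)) /
              (z ^ 2 * (z - 1) ^ 2)) * deriv y z
          + ((M₁ * z + M₂ * (z - 1)) / (z ^ 2 * (z - 1) ^ 2)) * y z = 0})
    (W : Set (ℂ → Fin 3 → ℂ))
    (hW : W = {f : ℂ → Fin 3 → ℂ | (∀ z ∉ U, f z = 0) ∧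
      ∀ z ∈ U, HasDerivAt f
        ((z⁻¹ • fuchsA K₁ K₂ L₁ L₂ L₃ M₁ M₂ η ζ
          + (z - 1)⁻¹ • fuchsB K₁ K₂ L₁ L₂ L₃ M₁ M₂ η ζ).mulVec (f z)) z}) :
    (∀ y ∈ V, gaugeMap η ζ U y ∈ W) ∧
    (∀ y₁ ∈ V, ∀ y₂ ∈ V, gaugeMap η ζ U (y₁ + y₂) = gaugeMap η ζ U y₁ + gaugeMap η ζ U y₂) ∧
    (∀ (c : ℂ), ∀ y ∈ V, gaugeMap η ζ U (c • y) = c • gaugeMap η ζ U y) ∧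
    Set.InjOn (gaugeMap η ζ U) V ∧
    Set.SurjOn (gaugeMap η ζ U) V W := by
  subst hV hW
  refine ⟨fun y ⟨_, hy, hode⟩ => ⟨fun z hz => gaugeMap_of_notMem hz, fun z hz => ?_⟩,
    fun y₁ h₁ y₂ h₂ => gaugeMap_add η ζ hU h₁.2.1 h₂.2.1,
    fun c y hy => gaugeMap_smul η ζ hU hy.2.1 c,
    (gaugeMap_injOn η ζ U).mono fun y hy => hy.1,
    fun f ⟨hf0, hf⟩ => ⟨fun w => f w 0, ⟨fun z hz => by simp [hf0 z hz],
      differentiableOn_apply_zero_of_fuchs hf, fun z hz => ?_⟩,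
      gaugeMap_apply_zero_of_fuchs hf hU hU01 hf0⟩⟩
  · obtain ⟨hz0, hz1⟩ := ne_zero_and_ne_one_of_mem hU01 hz
    exact hasDerivAt_gaugeMap_of_odeCleared_eq_zero hη hζ hU hy hz hz0 hz1
      ((odeCleared_eq_zero_iff hz0 hz1).1 (hode z hz))
  · obtain ⟨hz0, hz1⟩ := ne_zero_and_ne_one_of_mem hU01 hz
    exact (odeCleared_eq_zero_iff hz0 hz1).2
      (odeCleared_apply_zero_of_fuchs hf hη hζ hU hU01 hf0 hz)

/-- final assertion of Proposition 4.  The gauge map is a ℂ-linear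
isomorphism from the space `V` of holomorphic solutions of the third-order ODE
(8.1) on `U` onto the space `W` of holomorphic solutions of the first-order
Fuchsian system (solutions on `U` are encoded as functions vanishing off `U`). -/
theorem gauge_map_linear_isomorphism (K₁ K₂ L₁ L₂ L₃ M₁ M₂ η ζ : ℂ)
    (U : Set ℂ) (hU : IsOpen U) (hne : U.Nonempty) (hU01 : U ⊆ {0, 1}ᶜ)
    (hη : M₂ + η * ζ + η * K₂ - η = 0) (hζ : L₂ + ζ * K₂ + ζ ^ 2 - ζ = 0)
    (V : Set (ℂ → ℂ))
    (hV : V = {y : ℂ → ℂ | (∀ z ∉ U, y z = 0) ∧ DifferentiableOn ℂ y U ∧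
      ∀ z ∈ U,
        deriv (deriv (deriv y)) z
          + ((K₁ * z + K₂ * (z - 1)) / (z * (z - 1))) * deriv (deriv y) z
          + ((L₁ * z ^ 2 + L₂ * (z - 1) ^ 2 + L₃ * z * (z - 1)) /
              (z ^ 2 * (z - 1) ^ 2)) * deriv y z
          + ((M₁ * z + M₂ * (z - 1)) / (z ^ 2 * (z - 1) ^ 2)) * y z = 0})
    (W : Set (ℂ → Fin 3 → ℂ))
    (hW : W = {f : ℂ → Fin 3 → ℂ | (∀ z ∉ U, f z = 0) ∧
      ∀ z ∈ U, HasDerivAt f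
        ((z⁻¹ • fuchsA K₁ K₂ L₁ L₂ L₃ M₁ M₂ η ζ
          + (z - 1)⁻¹ • fuchsB K₁ K₂ L₁ L₂ L₃ M₁ M₂ η ζ).mulVec (f z)) z}) :
    (∀ y ∈ V, gaugeMap η ζ U y ∈ W) ∧
    (∀ y₁ ∈ V, ∀ y₂ ∈ V, gaugeMap η ζ U (y₁ + y₂) = gaugeMap η ζ U y₁ + gaugeMap η ζ U y₂) ∧
    (∀ (c : ℂ), ∀ y ∈ V, gaugeMap η ζ U (c • y) = c • gaugeMap η ζ U y) ∧
    Set.InjOn (gaugeMap η ζ U) V ∧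
    Set.SurjOn (gaugeMap η ζ U) V W :=
  gauge_map_linear_isomorphism_general K₁ K₂ L₁ L₂ L₃ M₁ M₂ η ζ U hU hU01 hη hζ V hV W hW
end

section
/- With the notation of the context, I(w) = −(1/(ac))·I(h₁ + h₃ + h₅), where w(t,s) = 1/((t−x)s). -/
open MeasureTheory

/-- The Dotsenko–Fateev weight `Φ(t,s) = |t|^a|s|^a|t−1|^b|s−1|^b|t−x|^c|s−y|^c|t−s|^g`. -/
noncomputable def dfWeight (a b c g x y : ℝ) (p : ℝ × ℝ) : ℝ :=
  |p.1| ^ a * |p.2| ^ a * |p.1 - 1| ^ b * |p.2 - 1| ^ b *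
    |p.1 - x| ^ c * |p.2 - y| ^ c * |p.1 - p.2| ^ g

/-- The complement in `ℝ²` of the seven lines `t=0, t=1, t=x, s=0, s=1, s=y, t=s`. -/
def dfComplement (x y : ℝ) : Set (ℝ × ℝ) :=
  {p | p.1 ≠ 0 ∧ p.1 ≠ 1 ∧ p.1 ≠ x ∧ p.2 ≠ 0 ∧ p.2 ≠ 1 ∧ p.2 ≠ y ∧ p.1 ≠ p.2}

/-- `I(h) = ∫_σ Φ h`. -/
noncomputable def dfInt (a b c g x y : ℝ) (σ : Set (ℝ × ℝ)) (h : ℝ × ℝ → ℝ) : ℝ :=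
  ∫ p in σ, dfWeight a b c g x y p * h p

/-- `h₁ = bc/((t−x)(s−1))`. -/
noncomputable def h1 (b c x : ℝ) (p : ℝ × ℝ) : ℝ := b * c / ((p.1 - x) * (p.2 - 1))

/-- `h₂ = bc/((t−1)(s−y))`. -/
noncomputable def h2 (b c y : ℝ) (p : ℝ × ℝ) : ℝ := b * c / ((p.1 - 1) * (p.2 - y))

/-- `h₃ = −cg/((t−x)(t−s))`. -/
noncomputable def h3 (c g x : ℝ) (p : ℝ × ℝ) : ℝ := -(c * g) / ((p.1 - x) * (p.1 - p.2))

/-- `h₄ = −cg/((s−y)(t−s))`. -/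
noncomputable def h4 (c g y : ℝ) (p : ℝ × ℝ) : ℝ := -(c * g) / ((p.2 - y) * (p.1 - p.2))

/-- `h₅ = c²/((t−x)(s−y))`. -/
noncomputable def h5 (c x y : ℝ) (p : ℝ × ℝ) : ℝ := c ^ 2 / ((p.1 - x) * (p.2 - y))

/-- `h₆ = −bg/((t−1)(t−s)) − bg/((s−1)(t−s))`. -/
noncomputable def h6 (b g : ℝ) (p : ℝ × ℝ) : ℝ :=
  -(b * g) / ((p.1 - 1) * (p.1 - p.2)) - b * g / ((p.2 - 1) * (p.1 - p.2))

/-- `h₇ = b²/((t−1)(s−1)) + bg/((s−1)(t−s))`. -/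
noncomputable def h7 (b g : ℝ) (p : ℝ × ℝ) : ℝ :=
  b ^ 2 / ((p.1 - 1) * (p.2 - 1)) + b * g / ((p.2 - 1) * (p.1 - p.2))

/-
On a bounded chamber `σ` the function `F = Φ / (a (t - x))` is continuous on `ℝ²` (as `c > 1`) and
vanishes on `∂σ`, since `Φ` vanishes on every line of the arrangement. Logarithmic differentiation,
`∂ₛ log Φ = a/s + b/(s-1) + c/(s-y) + g/(s-t)`, gives `∂ₛ F = Φ · (w + (h₁ + h₃ + h₅) / (ac))`.
A chamber of a line arrangement is convex, so every vertical slice of `σ` is an interval at whose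
endpoints `F` vanishes; Fubini and the fundamental theorem of calculus give `∫_σ ∂ₛ F = 0`.
The exponents exceed `1`, so all integrands are continuous on `ℝ²`, hence integrable on `σ`.
-/

open Set Filter Topology

theorem convex_connectedComponentIn_of_affine {E : Type*} [AddCommGroup E] [Module ℝ E]
    [TopologicalSpace E] [IsTopologicalAddGroup E] [ContinuousSMul ℝ E]
    (L : Set (E →ᵃ[ℝ] ℝ)) (hL : ∀ ℓ ∈ L, Continuous ℓ) (p : E) :
    Convex ℝ (connectedComponentIn {q | ∀ ℓ ∈ L, ℓ q ≠ 0} p) := by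
  set U := {q | ∀ ℓ ∈ L, ℓ q ≠ 0}
  refine convex_iff_segment_subset.2 fun q₁ hq₁ q₂ hq₂ => ?_
  rw [connectedComponentIn_eq hq₁] at hq₂ ⊢
  have hC := isPreconnected_connectedComponentIn (F := U) (x := q₁)
  refine (convex_segment q₁ q₂).isPreconnected.subset_connectedComponentIn
    (left_mem_segment ℝ q₁ q₂) fun z hz ℓ hℓ hℓz => ?_
  have hsub : uIcc (ℓ q₁) (ℓ q₂) ⊆ ℓ '' connectedComponentIn U q₁ :=
    (hC.image _ (hL ℓ hℓ).continuousOn).ordConnected.uIcc_subset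
      (mem_image_of_mem _ (mem_connectedComponentIn (connectedComponentIn_nonempty_iff.1 ⟨q₂, hq₂⟩)))
      (mem_image_of_mem _ hq₂)
  have hz' : ℓ z ∈ uIcc (ℓ q₁) (ℓ q₂) := by
    rw [← segment_eq_uIcc, ← image_segment]; exact mem_image_of_mem _ hz
  obtain ⟨w, hw, hwz⟩ := hsub hz'
  exact connectedComponentIn_subset U q₁ hw ℓ hℓ (hwz.trans hℓz)

theorem frontier_connectedComponentIn_subset {α : Type*} [TopologicalSpace α]
    [LocallyConnectedSpace α] {U : Set α} (hU : IsOpen U) (p : α) :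
    frontier (connectedComponentIn U p) ⊆ Uᶜ := by
  intro q hq hqU
  obtain ⟨w, hwq, hwp⟩ := mem_closure_iff.1 hq.1 _ hU.connectedComponentIn
    (mem_connectedComponentIn hqU)
  have hqp : q ∈ connectedComponentIn U p := by
    rw [connectedComponentIn_eq hwp, ← connectedComponentIn_eq hwq]
    exact mem_connectedComponentIn hqU
  exact hq.2 (hU.connectedComponentIn.interior_eq.symm ▸ hqp)

theorem continuous_abs_rpow_div_self {r : ℝ} (hr : 1 < r) : Continuous fun u : ℝ => |u| ^ r / u := by
  refine continuous_iff_continuousAt.2 fun u => ?_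
  rcases eq_or_ne u 0 with rfl | hu
  · have hbound : ∀ v : ℝ, ‖|v| ^ r / v‖ ≤ |v| ^ (r - 1) := fun v => by
      rcases eq_or_ne v 0 with rfl | hv
      · simpa using Real.rpow_nonneg le_rfl _
      · rw [norm_div, Real.norm_eq_abs, Real.norm_eq_abs, abs_of_nonneg (by positivity),
          Real.rpow_sub_one (abs_ne_zero.2 hv)]
    have hlim : Tendsto (fun v : ℝ => |v| ^ (r - 1)) (𝓝 0) (𝓝 0) := by
      simpa [Real.zero_rpow (by linarith : r - 1 ≠ 0)] using
        (continuous_abs.rpow_const fun _ => Or.inr (by linarith : 0 ≤ r - 1)).tendsto (0 : ℝ)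
    simpa [ContinuousAt] using squeeze_zero_norm hbound hlim
  · exact ((continuous_abs.rpow_const fun _ => Or.inr (by linarith)).continuousAt).div
      continuousAt_id hu

@[fun_prop]
theorem Continuous.abs_rpow_div_self {α : Type*} [TopologicalSpace α] {f : α → ℝ}
    (hf : Continuous f) {r : ℝ} (hr : 1 < r) : Continuous fun q => |f q| ^ r / f q :=
  (continuous_abs_rpow_div_self hr).comp hf

@[fun_prop]
theorem Continuous.abs_rpow {α : Type*} [TopologicalSpace α] {f : α → ℝ}
    (hf : Continuous f) {r : ℝ} (hr : 0 < r) : Continuous fun q => |f q| ^ r :=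
  hf.abs.rpow_const fun _ => Or.inr hr.le

theorem hasDerivAt_abs_rpow_of_ne_zero {u : ℝ} (hu : u ≠ 0) (r : ℝ) :
    HasDerivAt (fun v : ℝ => |v| ^ r) (|u| ^ r * (r / u)) u := by
  convert (hasDerivAt_abs hu).rpow_const (p := r) (Or.inl (abs_ne_zero.2 hu)) using 1
  rw [Real.rpow_sub_one (abs_ne_zero.2 hu)]
  rcases hu.lt_or_gt with h | h
  · simp only [abs_of_neg h, sign_neg h, SignType.coe_neg, SignType.coe_one, neg_mul, one_mul]
    field_simp
  · simp only [abs_of_pos h, sign_pos h, SignType.coe_one, one_mul]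
    field_simp

theorem hasDerivAt_abs_sub_rpow {u c : ℝ} (hu : u ≠ c) (r : ℝ) :
    HasDerivAt (fun v : ℝ => |v - c| ^ r) (|u - c| ^ r * (r / (u - c))) u :=
  (hasDerivAt_abs_rpow_of_ne_zero (sub_ne_zero.2 hu) r).comp_sub_const u c

theorem Continuous.integrableOn_of_isBounded {X E : Type*} [MeasurableSpace X]
    [MetricSpace X] [ProperSpace X] [OpensMeasurableSpace X] [NormedAddCommGroup E]
    {μ : Measure X} [IsFiniteMeasureOnCompacts μ] {f : X → E} (hf : Continuous f) {s : Set X}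
    (hs : Bornology.IsBounded s) : IntegrableOn f s μ :=
  (hf.continuousOn.integrableOn_compact hs.isCompact_closure).mono_set subset_closure

theorem setIntegral_eq_zero_of_hasDerivAt {S : Set ℝ} (hSo : IsOpen S) (hSc : S.OrdConnected)
    (hSb : Bornology.IsBounded S) {F D : ℝ → ℝ} (hF : Continuous F)
    (hF0 : ∀ s ∈ frontier S, F s = 0) (hD : IntegrableOn D S)
    (hderiv : ∀ s ∈ S, HasDerivAt F (D s) s) :
    ∫ s in S, D s = 0 := by
  rcases S.eq_empty_or_nonempty with rfl | hne
  · simp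
  set l := sInf S
  set u := sSup S
  have hS : S = Ioo l u :=
    ((interior_maximal (subset_Icc_csInf_csSup hSb.bddBelow hSb.bddAbove) hSo).trans_eq
      interior_Icc).antisymm
      (IsConnected.Ioo_csInf_csSup_subset ⟨hne, hSc.isPreconnected⟩ hSb.bddBelow hSb.bddAbove)
  have hlu : l < u := by
    obtain ⟨s, hs⟩ := hne
    rw [hS] at hs
    exact hs.1.trans hs.2
  rw [hS] at hF0 hD hderiv ⊢
  rw [frontier_Ioo hlu] at hF0
  rw [← integral_Ioc_eq_integral_Ioo, ← intervalIntegral.integral_of_le hlu.le,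
    intervalIntegral.integral_eq_sub_of_hasDerivAt_of_le hlu.le hF.continuousOn hderiv
      ((intervalIntegrable_iff_integrableOn_Ioo_of_le hlu.le).2 hD),
    hF0 u (by simp), hF0 l (by simp), sub_zero]

theorem setIntegral_eq_zero_of_hasDerivAt_snd {σ : Set (ℝ × ℝ)} (hσo : IsOpen σ)
    (hσc : Convex ℝ σ) (hσb : Bornology.IsBounded σ) {F D : ℝ × ℝ → ℝ} (hF : Continuous F)
    (hF0 : ∀ q ∈ frontier σ, F q = 0) (hD : IntegrableOn D σ)
    (hderiv : ∀ q ∈ σ, HasDerivAt (fun s => F (q.1, s)) (D q) q.2) :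
    ∫ q in σ, D q = 0 := by
  rw [← integrable_indicator_iff hσo.measurableSet, Measure.volume_eq_prod] at hD
  rw [← integral_indicator hσo.measurableSet, Measure.volume_eq_prod, integral_prod _ hD]
  refine integral_eq_zero_of_ae ?_
  filter_upwards [hD.prod_right_ae] with t ht
  have hslice : (fun s => σ.indicator D (t, s)) = (Prod.mk t ⁻¹' σ).indicator fun s => D (t, s) :=
    funext fun s => (indicator_comp_right (Prod.mk t) (s := σ) (g := D) (x := s)).symm
  have hcont : Continuous (Prod.mk t : ℝ → ℝ × ℝ) := Continuous.prodMk_right t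
  rw [hslice] at ht ⊢
  rw [integral_indicator (hσo.preimage hcont).measurableSet]
  refine setIntegral_eq_zero_of_hasDerivAt (hσo.preimage hcont) ?_ ?_ (hF.comp hcont)
    (fun s hs => hF0 _ (hcont.frontier_preimage_subset σ hs))
    ((integrable_indicator_iff (hσo.preimage hcont).measurableSet).1 ht)
    (fun s hs => hderiv (t, s) hs)
  · refine (convex_iff_segment_subset.2 fun s₁ h₁ s₂ h₂ => ?_).ordConnected
    rw [← image_subset_iff, Prod.image_mk_segment_right]
    exact convex_iff_segment_subset.1 hσc h₁ h₂
  · exact hσb.image_snd.subset fun s hs => ⟨(t, s), hs, rfl⟩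

section DotsenkoFateev

variable {a b c g x y : ℝ}

def dfLines (x y : ℝ) : Set (ℝ × ℝ →ᵃ[ℝ] ℝ) :=
  let t := (LinearMap.fst ℝ ℝ ℝ).toAffineMap
  let s := (LinearMap.snd ℝ ℝ ℝ).toAffineMap
  {t, t - AffineMap.const ℝ _ 1, t - AffineMap.const ℝ _ x,
    s, s - AffineMap.const ℝ _ 1, s - AffineMap.const ℝ _ y, t - s}

theorem dfComplement_eq_setOf_dfLines (x y : ℝ) :
    dfComplement x y = {q | ∀ ℓ ∈ dfLines x y, ℓ q ≠ 0} := by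
  ext q
  simp [dfComplement, dfLines, sub_ne_zero]

theorem isOpen_dfComplement (x y : ℝ) : IsOpen (dfComplement x y) := by
  simp only [dfComplement, ofPred_and]
  refine .inter ?_ (.inter ?_ (.inter ?_ (.inter ?_ (.inter ?_ (.inter ?_ ?_))))) <;>
    exact isOpen_ne_fun (by fun_prop) (by fun_prop)

theorem dfWeight_eq_zero_of_notMem (ha : 0 < a) (hb : 0 < b) (hc : 0 < c) (hg : 0 < g)
    {q : ℝ × ℝ} (hq : q ∉ dfComplement x y) : dfWeight a b c g x y q = 0 := by
  simp only [dfComplement, mem_ofPred_eq, not_and_or, not_not] at hq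
  rcases hq with h | h | h | h | h | h | h <;>
    simp [dfWeight, h, Real.zero_rpow, ha.ne', hb.ne', hc.ne', hg.ne']

-- Since `u / 0 = 0`, the rewriting below is valid on all of `ℝ²`, lines included.
theorem continuous_dfWeight_mul_w (ha : 1 < a) (hb : 0 < b) (hc : 1 < c) (hg : 0 < g) :
    Continuous fun q => dfWeight a b c g x y q * (1 / ((q.1 - x) * q.2)) := by
  have h : (fun q => dfWeight a b c g x y q * (1 / ((q.1 - x) * q.2))) = fun q : ℝ × ℝ =>
      |q.1| ^ a * (|q.2| ^ a / q.2) * |q.1 - 1| ^ b * |q.2 - 1| ^ b *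
        (|q.1 - x| ^ c / (q.1 - x)) * |q.2 - y| ^ c * |q.1 - q.2| ^ g := by
    funext q; simp only [dfWeight, div_eq_mul_inv, mul_inv]; ring
  rw [h]; fun_prop (disch := linarith)

theorem continuous_dfWeight_mul_h₁₃₅ (ha : 0 < a) (hb : 1 < b) (hc : 1 < c) (hg : 1 < g) :
    Continuous fun q => dfWeight a b c g x y q * (h1 b c x q + h3 c g x q + h5 c x y q) := by
  have h : (fun q => dfWeight a b c g x y q * (h1 b c x q + h3 c g x q + h5 c x y q)) =
      fun q : ℝ × ℝ => (|q.1| ^ a * |q.2| ^ a * |q.1 - 1| ^ b * (|q.1 - x| ^ c / (q.1 - x))) *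
        (b * c * ((|q.2 - 1| ^ b / (q.2 - 1)) * |q.2 - y| ^ c * |q.1 - q.2| ^ g)
          - c * g * (|q.2 - 1| ^ b * |q.2 - y| ^ c * (|q.1 - q.2| ^ g / (q.1 - q.2)))
          + c ^ 2 * (|q.2 - 1| ^ b * (|q.2 - y| ^ c / (q.2 - y)) * |q.1 - q.2| ^ g)) := by
    funext q; simp only [dfWeight, h1, h3, h5, div_eq_mul_inv, mul_inv]; ring
  rw [h]; fun_prop (disch := linarith)

noncomputable def dfPotential (a b c g x y : ℝ) (q : ℝ × ℝ) : ℝ :=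
  dfWeight a b c g x y q / (a * (q.1 - x))

theorem continuous_dfPotential (ha : 0 < a) (hb : 0 < b) (hc : 1 < c) (hg : 0 < g) :
    Continuous (dfPotential a b c g x y) := by
  have h : dfPotential a b c g x y = fun q : ℝ × ℝ => a⁻¹ *
      (|q.1| ^ a * |q.2| ^ a * |q.1 - 1| ^ b * |q.2 - 1| ^ b *
        (|q.1 - x| ^ c / (q.1 - x)) * |q.2 - y| ^ c * |q.1 - q.2| ^ g) := by
    funext q; simp only [dfPotential, dfWeight, div_eq_mul_inv, mul_inv]; ring
  rw [h]; fun_prop (disch := linarith)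

theorem hasDerivAt_dfWeight_snd {q : ℝ × ℝ} (hq : q ∈ dfComplement x y) :
    HasDerivAt (fun s => dfWeight a b c g x y (q.1, s))
      (dfWeight a b c g x y q * (a / q.2 + b / (q.2 - 1) + c / (q.2 - y) + g / (q.2 - q.1)))
      q.2 := by
  obtain ⟨-, -, -, h0, h1, hy, hd⟩ := hq
  have := (((hasDerivAt_abs_sub_rpow h0 a).fun_mul (hasDerivAt_abs_sub_rpow h1 b)).fun_mul
    ((hasDerivAt_abs_sub_rpow hy c).fun_mul (hasDerivAt_abs_sub_rpow hd.symm g))).const_mul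
      (|q.1| ^ a * |q.1 - 1| ^ b * |q.1 - x| ^ c)
  refine (this.congr_deriv ?_).congr_of_eventuallyEq (.of_forall fun s => ?_)
  · simp only [dfWeight, sub_zero, abs_sub_comm q.1 q.2]; ring
  · simp only [dfWeight, sub_zero, abs_sub_comm q.1 s]; ring

theorem hasDerivAt_dfPotential_snd (ha : a ≠ 0) (hc : c ≠ 0) {q : ℝ × ℝ}
    (hq : q ∈ dfComplement x y) :
    HasDerivAt (fun s => dfPotential a b c g x y (q.1, s))
      (dfWeight a b c g x y q * (1 / ((q.1 - x) * q.2)) +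
        1 / (a * c) * (dfWeight a b c g x y q * (h1 b c x q + h3 c g x q + h5 c x y q))) q.2 := by
  refine ((hasDerivAt_dfWeight_snd hq).div_const (a * (q.1 - x))).congr_deriv ?_
  obtain ⟨-, -, hx, h0, hs1, hy, hd⟩ := hq
  have : q.1 - x ≠ 0 := sub_ne_zero.2 hx
  have : q.2 - 1 ≠ 0 := sub_ne_zero.2 hs1
  have : q.2 - y ≠ 0 := sub_ne_zero.2 hy
  have : q.1 - q.2 ≠ 0 := sub_ne_zero.2 hd
  have : q.2 - q.1 ≠ 0 := sub_ne_zero.2 hd.symm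
  simp only [h1, h3, h5]
  field_simp
  ring

end DotsenkoFateev

theorem expansion_omega34_general (x y a b c g : ℝ)
    (ha : 1 < a) (hb : 1 < b) (hc : 1 < c) (hg : 1 < g)
    (σ : Set (ℝ × ℝ)) (hbd : Bornology.IsBounded σ)
    (hcc : ∃ p ∈ dfComplement x y, σ = connectedComponentIn (dfComplement x y) p) :
    dfInt a b c g x y σ (fun p => 1 / ((p.1 - x) * p.2)) =
      -(1 / (a * c)) * dfInt a b c g x y σ (fun p => h1 b c x p + h3 c g x p + h5 c x y p) := by
  obtain ⟨p, -, rfl⟩ := hcc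
  have ha₀ : 0 < a := by linarith
  have hb₀ : 0 < b := by linarith
  have hc₀ : 0 < c := by linarith
  have hg₀ : 0 < g := by linarith
  have hU := isOpen_dfComplement x y
  have hconv : Convex ℝ (connectedComponentIn (dfComplement x y) p) := by
    rw [dfComplement_eq_setOf_dfLines]
    exact convex_connectedComponentIn_of_affine _ (fun ℓ _ => ℓ.continuous_of_finiteDimensional) p
  have hw : IntegrableOn (fun q => dfWeight a b c g x y q * (1 / ((q.1 - x) * q.2)))
      (connectedComponentIn (dfComplement x y) p) :=
    (continuous_dfWeight_mul_w ha hb₀ hc hg₀).integrableOn_of_isBounded hbd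
  have hh : IntegrableOn
      (fun q => dfWeight a b c g x y q * (h1 b c x q + h3 c g x q + h5 c x y q))
      (connectedComponentIn (dfComplement x y) p) :=
    (continuous_dfWeight_mul_h₁₃₅ ha₀ hb hc hg).integrableOn_of_isBounded hbd
  have hF0 : ∀ q ∈ frontier (connectedComponentIn (dfComplement x y) p),
      dfPotential a b c g x y q = 0 := fun q hq => by
    rw [dfPotential, dfWeight_eq_zero_of_notMem ha₀ hb₀ hc₀ hg₀
      (frontier_connectedComponentIn_subset hU p hq), zero_div]
  have hzero := setIntegral_eq_zero_of_hasDerivAt_snd hU.connectedComponentIn hconv hbd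
    (continuous_dfPotential ha₀ hb₀ hc hg₀) hF0 (hw.add (hh.const_mul (1 / (a * c))))
    fun q hq => hasDerivAt_dfPotential_snd ha₀.ne' hc₀.ne' (connectedComponentIn_subset _ _ hq)
  rw [Pi.add_def, integral_add hw (hh.const_mul _), integral_const_mul] at hzero
  simp only [dfInt]
  linarith

/-- the cohomological expansion ω₃₄ ∼ −(1/(ac))(η₁+η₃+η₅)
integrated over a bounded chamber `σ` of the Dotsenko–Fateev arrangement. -/
theorem expansion_omega34 (x y a b c g : ℝ)
    (hx0 : x ≠ 0) (hx1 : x ≠ 1) (hy0 : y ≠ 0) (hy1 : y ≠ 1) (hxy : x ≠ y)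
    (ha : 1 < a) (hb : 1 < b) (hc : 1 < c) (hg : 1 < g)
    (σ : Set (ℝ × ℝ)) (hbd : Bornology.IsBounded σ)
    (hcc : ∃ p ∈ dfComplement x y, σ = connectedComponentIn (dfComplement x y) p) :
    dfInt a b c g x y σ (fun p => 1 / ((p.1 - x) * p.2)) =
      -(1 / (a * c)) * dfInt a b c g x y σ (fun p => h1 b c x p + h3 c g x p + h5 c x y p) :=
  expansion_omega34_general x y a b c g ha hb hc hg σ hbd hcc
end

section
/- With the notation of the context, I(w) = (1/(b(2b+g)))·I(h₆ + 2h₇), where w(t,s) = 1/((t−1)(s−1)). -/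
/-! On the complement of the lines `t = 1`, `s = 1`, `t = s` the partial fractions of
`h₆ + 2h₇` recombine, since `1/(s−1) − 1/(t−1) = (t−s)/((t−1)(s−1))`, into
`b(2b+g)/((t−1)(s−1))`. So the two forms agree off a Lebesgue-null set, and the integrals
agree over every domain. -/

open MeasureTheory

theorem ae_apply_ne_of_ne_zero {E : Type*} [NormedAddCommGroup E] [NormedSpace ℝ E]
    [MeasurableSpace E] [BorelSpace E] [FiniteDimensional ℝ E] (μ : Measure E)
    [μ.IsAddHaarMeasure] {ℓ : E →ₗ[ℝ] ℝ} (hℓ : ℓ ≠ 0) (c : ℝ) : ∀ᵐ p ∂μ, ℓ p ≠ c := by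
  obtain ⟨v, rfl⟩ := ℓ.surjective_or_eq_zero.resolve_right hℓ c
  have hlevel : {p | ¬ℓ p ≠ ℓ v} = (fun p => p + -v) ⁻¹' (LinearMap.ker ℓ) := by
    ext p
    simp [sub_eq_zero, ← sub_eq_add_neg]
  rw [ae_iff, hlevel, measure_preimage_add_right]
  exact Measure.addHaar_submodule μ _ (mt LinearMap.ker_eq_top.mp hℓ)

theorem ae_fst_ne_one_snd_ne_one_fst_ne_snd :
    ∀ᵐ p : ℝ × ℝ, p.1 ≠ 1 ∧ p.2 ≠ 1 ∧ p.1 ≠ p.2 := by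
  have hfst := ae_apply_ne_of_ne_zero volume (ℓ := LinearMap.fst ℝ ℝ ℝ)
    (fun h => by simpa using LinearMap.congr_fun h (1, 0)) 1
  have hsnd := ae_apply_ne_of_ne_zero volume (ℓ := LinearMap.snd ℝ ℝ ℝ)
    (fun h => by simpa using LinearMap.congr_fun h (0, 1)) 1
  have hdiag := ae_apply_ne_of_ne_zero volume (ℓ := LinearMap.fst ℝ ℝ ℝ - LinearMap.snd ℝ ℝ ℝ)
    (fun h => by simpa using LinearMap.congr_fun h (1, 0)) 0
  filter_upwards [hfst, hsnd, hdiag] with p h1 h2 h3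
  simp_all [sub_eq_zero]

theorem h6_add_two_mul_h7 (b g : ℝ) {p : ℝ × ℝ} (ht : p.1 ≠ 1) (hs : p.2 ≠ 1)
    (hts : p.1 ≠ p.2) :
    h6 b g p + 2 * h7 b g p = b * (2 * b + g) * (1 / ((p.1 - 1) * (p.2 - 1))) := by
  have ht' : p.1 - 1 ≠ 0 := sub_ne_zero.mpr ht
  have hs' : p.2 - 1 ≠ 0 := sub_ne_zero.mpr hs
  have hts' : p.1 - p.2 ≠ 0 := sub_ne_zero.mpr hts
  simp only [h6, h7]
  field_simp
  ring

section dfInt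

variable {a b c g x y : ℝ} {σ : Set (ℝ × ℝ)}

theorem dfInt_congr_ae {h h' : ℝ × ℝ → ℝ} (hh : h =ᵐ[volume] h') :
    dfInt a b c g x y σ h = dfInt a b c g x y σ h' := by
  refine integral_congr_ae (ae_restrict_of_ae ?_)
  filter_upwards [hh] with p hp
  rw [hp]

theorem dfInt_const_mul (k : ℝ) (h : ℝ × ℝ → ℝ) :
    dfInt a b c g x y σ (fun p => k * h p) = k * dfInt a b c g x y σ h := by
  simp only [dfInt, mul_left_comm _ k, integral_const_mul]

end dfInt

theorem expansion_omega25_general (x y a b c g : ℝ)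
    (hb : 1 < b) (hg : 1 < g)
    (σ : Set (ℝ × ℝ)) :
    dfInt a b c g x y σ (fun p => 1 / ((p.1 - 1) * (p.2 - 1))) =
      (1 / (b * (2 * b + g))) * dfInt a b c g x y σ (fun p => h6 b g p + 2 * h7 b g p) := by
  have hK : b * (2 * b + g) ≠ 0 := by positivity
  have hforms : (fun p => h6 b g p + 2 * h7 b g p) =ᵐ[volume]
      fun p => b * (2 * b + g) * (1 / ((p.1 - 1) * (p.2 - 1))) := by
    filter_upwards [ae_fst_ne_one_snd_ne_one_fst_ne_snd] with p ⟨ht, hs, hts⟩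
    exact h6_add_two_mul_h7 b g ht hs hts
  rw [dfInt_congr_ae hforms, dfInt_const_mul, ← mul_assoc,
    one_div_mul_cancel hK, one_mul]

/-- the cohomological expansion ω₂₅ ∼ (1/(b(2b+g)))(η₆+2η₇)
integrated over a bounded chamber `σ` of the Dotsenko–Fateev arrangement. -/
theorem expansion_omega25 (x y a b c g : ℝ)
    (hx0 : x ≠ 0) (hx1 : x ≠ 1) (hy0 : y ≠ 0) (hy1 : y ≠ 1) (hxy : x ≠ y)
    (ha : 1 < a) (hb : 1 < b) (hc : 1 < c) (hg : 1 < g)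
    (σ : Set (ℝ × ℝ)) (hbd : Bornology.IsBounded σ)
    (hcc : ∃ p ∈ dfComplement x y, σ = connectedComponentIn (dfComplement x y) p) :
    dfInt a b c g x y σ (fun p => 1 / ((p.1 - 1) * (p.2 - 1))) =
      (1 / (b * (2 * b + g))) * dfInt a b c g x y σ (fun p => h6 b g p + 2 * h7 b g p) :=
  expansion_omega25_general x y a b c g hb hg σ
end

section
/- With the notation of the context, for every 1 ≤ k ≤ n: I(w_k) = (1/((2a_k+g)a_k))·I(Θ_k + 2Θ_{kk}), where w_k(t,s) = 1/((t−x_k)(s−x_k)). -/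
open MeasureTheory

/-- The weight `Φ(t,s) = ∏_{i=0}^{n} |t−x_i|^{a_i}|s−x_i|^{a_i} · |t−s|^g` of the
arrangement of Section 6. -/
noncomputable def arrWeight (n : ℕ) (x a : ℕ → ℝ) (g : ℝ) (p : ℝ × ℝ) : ℝ :=
  (∏ i ∈ Finset.range (n + 1), (|p.1 - x i| ^ a i * |p.2 - x i| ^ a i)) * |p.1 - p.2| ^ g

/-- The complement in `ℝ²` of the lines `t = x_i`, `s = x_i` (`0 ≤ i ≤ n`), `t = s`. -/
def arrComplement (n : ℕ) (x : ℕ → ℝ) : Set (ℝ × ℝ) :=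
  {p | (∀ i ≤ n, p.1 ≠ x i ∧ p.2 ≠ x i) ∧ p.1 ≠ p.2}

/-- `Θ_{ij}`: the `dt∧ds`–coefficient of the β-nbc form `θ(V_i,H_j)` (including `i = j`). -/
noncomputable def ThetaIJ (x a : ℕ → ℝ) (g : ℝ) (i j : ℕ) (p : ℝ × ℝ) : ℝ :=
  if i = j then
    a i ^ 2 / ((p.1 - x i) * (p.2 - x i)) + a i * g / ((p.1 - p.2) * (p.2 - x i))
  else a i * a j / ((p.1 - x i) * (p.2 - x j))

/-- `Θ_k`: the `dt∧ds`–coefficient of the β-nbc form `θ(V_k,D)`. -/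
noncomputable def ThetaD (x a : ℕ → ℝ) (g : ℝ) (k : ℕ) (p : ℝ × ℝ) : ℝ :=
  -(a k) * g * (1 / ((p.1 - x k) * (p.1 - p.2)) + 1 / ((p.2 - x k) * (p.1 - p.2)))
/-! Off the lines `t = x_k`, `s = x_k` and `t = s`, the partial-fraction identity
`1/((s-x_k)(t-s)) - 1/((t-x_k)(t-s)) = 1/((t-x_k)(s-x_k))` gives
`Θ_k + 2Θ_{kk} = (2a_k+g) a_k w_k` pointwise. These lines are Lebesgue-null, so the two
integrands agree almost everywhere. -/

namespace MeasureTheory.Measure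

variable {α β : Type*} [MeasurableSpace α] [MeasurableSpace β] {μ : Measure α} {ν : Measure β}

lemma ae_prod_fst_ne [SFinite ν] [NullSingletonClass μ] (c : α) : ∀ᵐ p ∂μ.prod ν, p.1 ≠ c :=
  quasiMeasurePreserving_fst.tendsto_ae.eventually (μ.ae_ne c)

lemma ae_prod_snd_ne [SFinite μ] [SFinite ν] [NullSingletonClass ν] (c : β) :
    ∀ᵐ p ∂μ.prod ν, p.2 ≠ c :=
  quasiMeasurePreserving_snd.tendsto_ae.eventually (ν.ae_ne c)

lemma ae_prod_fst_ne_snd [MeasurableEq α] {ν : Measure α} [SFinite ν] [NullSingletonClass ν] :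
    ∀ᵐ p ∂μ.prod ν, p.1 ≠ p.2 :=
  (ae_prod_iff_ae_ae measurableSet_diagonal.compl).2 <|
    ae_of_all _ fun t => (ν.ae_ne t).mono fun _ h => h.symm

end MeasureTheory.Measure

lemma ThetaD_add_two_mul_ThetaIJ_self (x a : ℕ → ℝ) (g : ℝ) (k : ℕ) {p : ℝ × ℝ}
    (ht : p.1 ≠ x k) (hs : p.2 ≠ x k) (hts : p.1 ≠ p.2) :
    ThetaD x a g k p + 2 * ThetaIJ x a g k k p =
      (2 * a k + g) * a k * (1 / ((p.1 - x k) * (p.2 - x k))) := by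
  have ht := sub_ne_zero.2 ht
  have hs := sub_ne_zero.2 hs
  have hts := sub_ne_zero.2 hts
  simp only [ThetaD, ThetaIJ, ↓reduceIte]
  field_simp
  ring

theorem expansion_VkHk_general (n : ℕ) (x a : ℕ → ℝ) (g : ℝ)
    (ha : ∀ i ≤ n, 1 < a i) (hg : 1 < g)
    (σ : Set (ℝ × ℝ)) :
    ∀ k, 1 ≤ k → k ≤ n →
      (∫ p in σ, arrWeight n x a g p * (1 / ((p.1 - x k) * (p.2 - x k)))) =
        (1 / ((2 * a k + g) * a k)) *
          ∫ p in σ, arrWeight n x a g p * (ThetaD x a g k p + 2 * ThetaIJ x a g k k p) := by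
  intro k _ hkn
  have hak := ha k hkn
  have hc : (2 * a k + g) * a k ≠ 0 := by positivity
  rw [← integral_const_mul]
  refine integral_congr_ae (ae_restrict_of_ae ?_)
  filter_upwards [Measure.ae_prod_fst_ne (ν := volume) (x k),
    Measure.ae_prod_snd_ne (μ := volume) (x k), Measure.ae_prod_fst_ne_snd] with p ht hs hts
  rw [ThetaD_add_two_mul_ThetaIJ_self x a g k ht hs hts]
  field_simp

/-- the cohomological expansion
`V_k H_k ∼ (1/((2a_k+g)a_k))(θ(V_k,D) + 2θ(V_k,H_k))` of Section 6,
integrated over a bounded chamber `σ` of the arrangement. -/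
theorem expansion_VkHk (n : ℕ) (hn : 1 ≤ n) (x a : ℕ → ℝ) (g : ℝ)
    (hx0 : x 0 = 0) (hx1 : x 1 = 1)
    (hdist : ∀ i ≤ n, ∀ j ≤ n, i ≠ j → x i ≠ x j)
    (ha : ∀ i ≤ n, 1 < a i) (hg : 1 < g)
    (σ : Set (ℝ × ℝ)) (hbd : Bornology.IsBounded σ)
    (hcc : ∃ p ∈ arrComplement n x, σ = connectedComponentIn (arrComplement n x) p) :
    ∀ k, 1 ≤ k → k ≤ n →
      (∫ p in σ, arrWeight n x a g p * (1 / ((p.1 - x k) * (p.2 - x k)))) =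
        (1 / ((2 * a k + g) * a k)) *
          ∫ p in σ, arrWeight n x a g p * (ThetaD x a g k p + 2 * ThetaIJ x a g k k p) :=
  expansion_VkHk_general n x a g ha hg σ
end
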